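/- arXiv:1706.04066 — 2 statements merged into one kernel-verified Lean document; each statement's English description precedes it below -/
import Mathlib

section
/- Let s ∈ (0,1) and set ψ_s(z) = (2^{1−s}/Γ(s)) z^s K_s(z) for z > 0. Then ψ_s is strictly decreasing on (0,∞), i.e. for all 0 < z₁ < z₂ it holds ψ_s(z₂) < ψ_s(z₁). -/
/-- The modified Bessel function of the second kind,
`K_ν(z) = ∫₀^∞ exp(−z cosh t) cosh(ν t) dt`. -/
noncomputable def besselK (ν z : ℝ) : ℝ :=
  ∫ t in Set.Ioi (0:ℝ), Real.exp (-z * Real.cosh t) * Real.cosh (ν * t)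

/-- `ψ_s(z) = (2^{1−s}/Γ(s)) z^s K_s(z)`. -/
noncomputable def psi (s z : ℝ) : ℝ :=
  (2 ^ (1 - s) / Real.Gamma s) * z ^ s * besselK s z

/-!
Substituting `w = z eᵗ` in `2 K_s(z) = ∫_ℝ exp(-z cosh t) e^{st} dt` gives
`z^s K_s(z) = ½ ∫₀^∞ exp(-(w + z²/w)/2) w^{s-1} dw`.
For fixed `w > 0` the integrand is strictly decreasing in `z > 0`, hence so is `ψ_s`.
-/

open Real MeasureTheory Set

theorem MeasureTheory.setIntegral_lt_setIntegral_of_forall_lt {X : Type*} [MeasurableSpace X]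
    {μ : Measure X} {s : Set X} {f g : X → ℝ} (hs : MeasurableSet s) (hμs : μ s ≠ 0)
    (hf : IntegrableOn f s μ) (hg : IntegrableOn g s μ) (hfg : ∀ x ∈ s, f x < g x) :
    ∫ x in s, f x ∂μ < ∫ x in s, g x ∂μ := by
  have hpos : 0 < ∫ x in s, (g x - f x) ∂μ := by
    rw [setIntegral_pos_iff_support_of_nonneg_ae (f := fun x => g x - f x) _ (hg.sub hf)]
    · have hsupp : s ⊆ Function.support fun x => g x - f x :=
        fun x hx => (sub_pos.2 (hfg x hx)).ne'
      rwa [inter_eq_right.2 hsupp, pos_iff_ne_zero]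
    · filter_upwards [ae_restrict_mem hs] with x hx
      exact (sub_pos.2 (hfg x hx)).le
  rw [integral_sub hg hf] at hpos
  linarith

noncomputable def besselKKernel (s z w : ℝ) : ℝ := exp (-((w + z ^ 2 / w) / 2)) * w ^ (s - 1)

theorem besselKKernel_integrableOn {s : ℝ} (hs : 0 < s) (z : ℝ) :
    IntegrableOn (besselKKernel s z) (Ioi 0) := by
  have hdom : IntegrableOn (fun w : ℝ => w ^ (s - 1) * exp (-(1 / 2) * w ^ (1 : ℝ))) (Ioi 0) :=
    integrableOn_rpow_mul_exp_neg_mul_rpow (by linarith) one_pos (by norm_num)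
  refine hdom.mono' (by unfold besselKKernel; fun_prop) ?_
  filter_upwards [ae_restrict_mem measurableSet_Ioi] with w (hw : 0 < w)
  rw [besselKKernel, norm_of_nonneg (by positivity), rpow_one, mul_comm (w ^ (s - 1))]
  gcongr
  have : 0 ≤ z ^ 2 / w := by positivity
  linarith

theorem besselKKernel_lt_of_lt {s z₁ z₂ w : ℝ} (hw : 0 < w) (hz₁ : 0 ≤ z₁) (hz : z₁ < z₂) :
    besselKKernel s z₂ w < besselKKernel s z₁ w := by
  unfold besselKKernel
  gcongr

theorem integral_besselKKernel_strictAntiOn {s : ℝ} (hs : 0 < s) :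
    StrictAntiOn (fun z => ∫ w in Ioi 0, besselKKernel s z w) (Ici 0) :=
  fun _ hz₁ _ _ hz =>
    setIntegral_lt_setIntegral_of_forall_lt measurableSet_Ioi (by simp)
      (besselKKernel_integrableOn hs _) (besselKKernel_integrableOn hs _)
      fun _ hw => besselKKernel_lt_of_lt hw hz₁ hz

theorem range_const_mul_exp {z : ℝ} (hz : 0 < z) : range (fun t => z * exp t) = Ioi 0 := by
  rw [range_comp' (z * ·) exp, range_exp, image_const_mul_Ioi_zero hz]

theorem const_mul_exp_injective {z : ℝ} (hz : z ≠ 0) : Function.Injective fun t => z * exp t :=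
  fun _ _ h => exp_injective (mul_left_cancel₀ hz h)

theorem abs_mul_besselKKernel_const_mul_exp (s : ℝ) {z : ℝ} (hz : 0 < z) (t : ℝ) :
    |z * exp t| • besselKKernel s z (z * exp t) = z ^ s * (exp (-z * cosh t) * exp (s * t)) := by
  have hzt : 0 < z * exp t := by positivity
  have hcosh : (z * exp t + z ^ 2 / (z * exp t)) / 2 = z * cosh t := by
    rw [cosh_eq, exp_neg]
    field_simp
  have hpow : z * exp t * (z * exp t) ^ (s - 1) = z ^ s * exp (s * t) := by
    rw [rpow_sub_one hzt.ne', mul_div_cancel₀ _ hzt.ne', mul_rpow hz.le (exp_pos t).le,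
      ← exp_mul, mul_comm t]
  rw [abs_of_pos hzt, smul_eq_mul, besselKKernel, hcosh, neg_mul, mul_left_comm, hpow]
  ring

theorem integral_besselKKernel_eq (s : ℝ) {z : ℝ} (hz : 0 < z) :
    ∫ w in Ioi 0, besselKKernel s z w = z ^ s * ∫ t, exp (-z * cosh t) * exp (s * t) := by
  rw [← range_const_mul_exp hz, ← image_univ,
    integral_image_eq_integral_abs_deriv_smul MeasurableSet.univ
    (fun t _ => ((hasDerivAt_exp t).const_mul z).hasDerivWithinAt)
    (const_mul_exp_injective hz.ne').injOn,
    Measure.restrict_univ, ← integral_const_mul]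
  simp_rw [abs_mul_besselKKernel_const_mul_exp s hz]

theorem integrable_exp_neg_mul_cosh_mul_exp {s z : ℝ} (hs : 0 < s) (hz : 0 < z) :
    Integrable fun t => exp (-z * cosh t) * exp (s * t) := by
  have hkernel : IntegrableOn (besselKKernel s z) ((fun t => z * exp t) '' univ) := by
    rw [image_univ, range_const_mul_exp hz]
    exact besselKKernel_integrableOn hs z
  have h := (integrableOn_image_iff_integrableOn_abs_deriv_smul MeasurableSet.univ
    (fun t _ => ((hasDerivAt_exp t).const_mul z).hasDerivWithinAt)
    (const_mul_exp_injective hz.ne').injOn (besselKKernel s z)).1 hkernel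
  simp_rw [integrableOn_univ, abs_mul_besselKKernel_const_mul_exp s hz] at h
  exact (integrable_const_mul_iff (rpow_pos_of_pos hz s).ne'.isUnit _).1 h

theorem two_mul_besselK_eq_integral {s z : ℝ}
    (hF : Integrable fun t => exp (-z * cosh t) * exp (s * t)) :
    2 * besselK s z = ∫ t, exp (-z * cosh t) * exp (s * t) := by
  calc 2 * besselK s z = ∫ t, exp (-z * cosh |t|) * cosh (s * |t|) := by
        rw [besselK, integral_comp_abs (f := fun t => exp (-z * cosh t) * cosh (s * t))]
    _ = ∫ t, (exp (-z * cosh t) * exp (s * t) + exp (-z * cosh (-t)) * exp (s * -t)) / 2 := by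
        congr 1 with t
        rcases abs_choice t with h | h <;>
          simp only [h, mul_neg, cosh_neg, cosh_eq (s * t)] <;> ring
    _ = ∫ t, exp (-z * cosh t) * exp (s * t) := by
        rw [integral_div, integral_add hF hF.comp_neg,
          integral_neg_eq_self (fun t => exp (-z * cosh t) * exp (s * t))]
        ring

theorem rpow_mul_besselK_eq {s z : ℝ} (hs : 0 < s) (hz : 0 < z) :
    z ^ s * besselK s z = (∫ w in Ioi 0, besselKKernel s z w) / 2 := by
  rw [integral_besselKKernel_eq s hz,
    ← two_mul_besselK_eq_integral (integrable_exp_neg_mul_cosh_mul_exp hs hz)]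
  ring

/-- `ψ_s` is strictly decreasing on `(0,∞)`. -/
theorem psi_strictAnti (s : ℝ) (hs : s ∈ Set.Ioo (0:ℝ) 1) :
    ∀ z₁ z₂ : ℝ, 0 < z₁ → z₁ < z₂ → psi s z₂ < psi s z₁ := by
  intro z₁ z₂ hz₁ hz
  have hz₂ : 0 < z₂ := hz₁.trans hz
  have hs₀ : 0 < s := hs.1
  simp only [psi, mul_assoc, rpow_mul_besselK_eq hs₀ hz₁, rpow_mul_besselK_eq hs₀ hz₂]
  gcongr
  exact integral_besselKKernel_strictAntiOn hs₀ hz₁.le hz₂.le hz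
end

section
/- Let s ∈ (0,1), set s₀' = min(1−s, 1/2), and let ψ_s(z) = (2^{1−s}/Γ(s)) z^s K_s(z) for z > 0. Let a > 0 and r ≥ s₀' − s. Then there exists a constant c > 0, depending only on r and s, such that for every z ≥ a it holds |z^{r} ψ_s'(z)| ≤ c · e^{−z/2} · (2^{1−s}/Γ(s)) a^{s₀'} e^{a} K_{1−s}(a), where ψ_s' denotes the derivative of ψ_s. -/
/-!
Differentiating under the integral sign, and integrating `exp (-z cosh t) sinh (ν t)` by parts,
gives the recurrence `K_ν' = -K_{1-ν} - (ν / z) K_ν`, that is `(z^ν K_ν)' = -z^ν K_{1-ν}`. Hence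
`ψ_s' = -c_s z^s K_{1-s}`, and `z^ν K_ν` is nonincreasing; since `cosh ≥ 1`, so is `e^z K_ν`.
Take `ν = 1 - s`, `σ = s₀' ≤ ν` and `ρ = r + s ≥ σ`. For `z ≤ 1` the monotonicity of `z^ν K_ν`
gives `z^ρ K_ν(z) ≤ a^σ K_ν(a)`. For `z ≥ 1` the monotonicity of `e^z K_ν`, started at
`max a 1`, gives the factor `e^{-z}`, half of which absorbs `z^ρ`; if `a < 1`, the way from `1`
back to `a` is again the monotonicity of `z^ν K_ν`.
-/

open Real MeasureTheory Set Filter Topology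

lemma cosh_mul_le_exp (ν : ℝ) {t : ℝ} (ht : 0 ≤ t) : cosh (ν * t) ≤ exp (|ν| * t) := by
  rw [← cosh_abs, abs_mul, abs_of_nonneg ht, cosh_eq]
  linarith [exp_le_exp.2 (neg_le_self (mul_nonneg (abs_nonneg ν) ht))]

lemma abs_sinh_mul_le_exp (ν : ℝ) {t : ℝ} (ht : 0 ≤ t) : |sinh (ν * t)| ≤ exp (|ν| * t) := by
  refine le_trans ?_ (cosh_mul_le_exp ν ht)
  rw [abs_sinh, ← cosh_abs (ν * t)]
  exact (sinh_lt_cosh _).le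

lemma mul_sub_mul_cosh_le (c : ℝ) {z t : ℝ} (hz : 0 < z) (ht : 0 ≤ t) :
    c * t - z * cosh t ≤ (c + 1) ^ 2 / z - t := by
  have hcosh : t ^ 2 / 4 ≤ cosh t := by
    rw [cosh_eq]
    nlinarith [quadratic_le_exp_of_nonneg ht, exp_pos (-t)]
  have hsq : z * t ^ 2 / 4 - (c + 1) * t + (c + 1) ^ 2 / z = (z * t / 2 - (c + 1)) ^ 2 / z := by
    field_simp
    ring
  have hsq_nonneg : 0 ≤ (z * t / 2 - (c + 1)) ^ 2 / z := by positivity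
  nlinarith [mul_le_mul_of_nonneg_left hcosh hz.le]

lemma abs_exp_neg_mul_cosh_mul_le {z t x c : ℝ} (hx : |x| ≤ exp (c * t)) :
    |exp (-z * cosh t) * x| ≤ exp (c * t - z * cosh t) := by
  rw [abs_mul, abs_of_pos (exp_pos _), show c * t - z * cosh t = -z * cosh t + c * t by ring,
    exp_add]
  gcongr

lemma tendsto_exp_mul_sub_mul_cosh_atTop (c : ℝ) {z : ℝ} (hz : 0 < z) :
    Tendsto (fun t => exp (c * t - z * cosh t)) atTop (𝓝 0) := by
  refine squeeze_zero' (Eventually.of_forall fun t => (exp_pos _).le) ?_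
    (tendsto_exp_atBot.comp (tendsto_atBot_add_const_left _ ((c + 1) ^ 2 / z)
      tendsto_neg_atTop_atBot))
  filter_upwards [eventually_ge_atTop 0] with t ht
  exact exp_le_exp.2 (mul_sub_mul_cosh_le c hz ht)

lemma integrableOn_Ioi_of_abs_le_exp_mul_sub_mul_cosh {f : ℝ → ℝ} (hf : Continuous f) (c : ℝ)
    {z : ℝ} (hz : 0 < z) (hbound : ∀ t, 0 < t → |f t| ≤ exp (c * t - z * cosh t)) :
    IntegrableOn f (Ioi 0) := by
  refine ((exp_neg_integrableOn_Ioi 0 one_pos).const_mul (exp ((c + 1) ^ 2 / z))).mono'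
    hf.aestronglyMeasurable.restrict
    ((ae_restrict_iff' measurableSet_Ioi).2 (Eventually.of_forall fun t ht => ?_))
  rw [norm_eq_abs, ← exp_add]
  exact (hbound t ht).trans (exp_le_exp.2 (by linarith [mul_sub_mul_cosh_le c hz ht.le]))

lemma integrableOn_besselK_integrand (ν : ℝ) {z : ℝ} (hz : 0 < z) :
    IntegrableOn (fun t => exp (-z * cosh t) * cosh (ν * t)) (Ioi 0) :=
  integrableOn_Ioi_of_abs_le_exp_mul_sub_mul_cosh (by fun_prop) |ν| hz fun t ht =>
    abs_exp_neg_mul_cosh_mul_le ((abs_of_pos (cosh_pos _)).trans_le (cosh_mul_le_exp ν ht.le))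

lemma integrableOn_sinh_mul_sinh_integrand (ν : ℝ) {z : ℝ} (hz : 0 < z) :
    IntegrableOn (fun t => exp (-z * cosh t) * (sinh t * sinh (ν * t))) (Ioi 0) := by
  refine integrableOn_Ioi_of_abs_le_exp_mul_sub_mul_cosh (by fun_prop) (1 + |ν|) hz fun t ht =>
    abs_exp_neg_mul_cosh_mul_le ?_
  have h1 := abs_sinh_mul_le_exp 1 ht.le
  rw [one_mul, abs_one] at h1
  rw [abs_mul, add_mul, exp_add]
  exact mul_le_mul h1 (abs_sinh_mul_le_exp ν ht.le) (abs_nonneg _) (exp_pos _).le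

lemma besselK_nonneg (ν z : ℝ) : 0 ≤ besselK ν z :=
  integral_nonneg fun t => by positivity

lemma cosh_mul_exp_mul_cosh_eq (ν z t : ℝ) :
    cosh t * (exp (-z * cosh t) * cosh (ν * t)) =
      exp (-z * cosh t) * cosh ((1 - ν) * t) + exp (-z * cosh t) * (sinh t * sinh (ν * t)) := by
  rw [sub_mul, one_mul, cosh_sub]
  ring

lemma integral_cosh_mul_besselK_integrand_eq (ν : ℝ) {z : ℝ} (hz : 0 < z) :
    ∫ t in Ioi 0, cosh t * (exp (-z * cosh t) * cosh (ν * t)) =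
      besselK (1 - ν) z + ∫ t in Ioi 0, exp (-z * cosh t) * (sinh t * sinh (ν * t)) := by
  simp_rw [cosh_mul_exp_mul_cosh_eq]
  exact integral_add (integrableOn_besselK_integrand (1 - ν) hz)
    (integrableOn_sinh_mul_sinh_integrand ν hz)

lemma integrableOn_cosh_mul_besselK_integrand (ν : ℝ) {z : ℝ} (hz : 0 < z) :
    IntegrableOn (fun t => cosh t * (exp (-z * cosh t) * cosh (ν * t))) (Ioi 0) := by
  simp_rw [cosh_mul_exp_mul_cosh_eq]
  exact (integrableOn_besselK_integrand (1 - ν) hz).add (integrableOn_sinh_mul_sinh_integrand ν hz)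

lemma hasDerivAt_besselK_eq_integral (ν : ℝ) {z : ℝ} (hz : 0 < z) :
    HasDerivAt (besselK ν) (-∫ t in Ioi 0, cosh t * (exp (-z * cosh t) * cosh (ν * t))) z := by
  have hdom : ∀ t, ∀ x ∈ Metric.ball z (z / 2),
      ‖-(cosh t * (exp (-x * cosh t) * cosh (ν * t)))‖ ≤
        cosh t * (exp (-(z / 2) * cosh t) * cosh (ν * t)) := by
    intro t x hx
    have hzx : z / 2 < x := by
      rw [Metric.mem_ball, dist_eq, abs_lt] at hx
      linarith [hx.1]
    rw [norm_neg, norm_of_nonneg (by positivity)]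
    gcongr
  have hderiv : ∀ t x, HasDerivAt (fun x => exp (-x * cosh t) * cosh (ν * t))
      (-(cosh t * (exp (-x * cosh t) * cosh (ν * t)))) x := fun t x =>
    (((hasDerivAt_neg x).mul_const (cosh t)).exp.mul_const (cosh (ν * t))).congr_deriv (by ring)
  have h := hasDerivAt_integral_of_dominated_loc_of_deriv_le
    (μ := volume.restrict (Ioi 0)) (Metric.ball_mem_nhds z (half_pos hz))
    (Eventually.of_forall fun x => (by fun_prop : Continuous fun t =>
      exp (-x * cosh t) * cosh (ν * t)).aestronglyMeasurable.restrict)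
    (integrableOn_besselK_integrand ν hz)
    (by fun_prop : Continuous fun t =>
      -(cosh t * (exp (-z * cosh t) * cosh (ν * t)))).aestronglyMeasurable.restrict
    (ae_of_all _ hdom) (integrableOn_cosh_mul_besselK_integrand ν (half_pos hz))
    (ae_of_all _ fun t x _ => hderiv t x)
  rw [← integral_neg]
  exact h.2

lemma mul_besselK_eq_integral (ν : ℝ) {z : ℝ} (hz : 0 < z) :
    ν * besselK ν z = z * ∫ t in Ioi 0, exp (-z * cosh t) * (sinh t * sinh (ν * t)) := by
  have hderiv : ∀ t ∈ Ici (0 : ℝ), HasDerivAt (fun t => exp (-z * cosh t) * sinh (ν * t))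
      (ν * (exp (-z * cosh t) * cosh (ν * t)) -
        z * (exp (-z * cosh t) * (sinh t * sinh (ν * t)))) t :=
    fun t _ => (((hasDerivAt_cosh t).const_mul (-z)).exp.fun_mul
      ((hasDerivAt_id t).const_mul ν).sinh).congr_deriv (by simp only [id]; ring)
  have hlim : Tendsto (fun t => exp (-z * cosh t) * sinh (ν * t)) atTop (𝓝 0) := by
    refine squeeze_zero_norm' ?_ (tendsto_exp_mul_sub_mul_cosh_atTop |ν| hz)
    filter_upwards [eventually_ge_atTop 0] with t ht
    exact abs_exp_neg_mul_cosh_mul_le (abs_sinh_mul_le_exp ν ht)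
  have hI1 := (integrableOn_besselK_integrand ν hz).const_mul ν
  have hI2 := (integrableOn_sinh_mul_sinh_integrand ν hz).const_mul z
  have h := integral_Ioi_of_hasDerivAt_of_tendsto' hderiv (hI1.sub hI2) hlim
  rw [integral_sub hI1 hI2, integral_const_mul, integral_const_mul] at h
  simp only [mul_zero, sinh_zero, sub_zero, sub_eq_zero] at h
  exact h

lemma hasDerivAt_besselK (ν : ℝ) {z : ℝ} (hz : 0 < z) :
    HasDerivAt (besselK ν) (-besselK (1 - ν) z - ν / z * besselK ν z) z := by
  convert hasDerivAt_besselK_eq_integral ν hz using 1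
  rw [integral_cosh_mul_besselK_integrand_eq ν hz, div_mul_eq_mul_div,
    mul_besselK_eq_integral ν hz, mul_div_cancel_left₀ _ hz.ne']
  ring

lemma hasDerivAt_rpow_mul_besselK (ν : ℝ) {z : ℝ} (hz : 0 < z) :
    HasDerivAt (fun x => x ^ ν * besselK ν x) (-(z ^ ν * besselK (1 - ν) z)) z := by
  refine ((hasDerivAt_rpow_const (p := ν) (Or.inl hz.ne')).mul
    (hasDerivAt_besselK ν hz)).congr_deriv ?_
  rw [rpow_sub_one hz.ne']
  field_simp
  ring

lemma hasDerivAt_psi (s : ℝ) {z : ℝ} (hz : 0 < z) :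
    HasDerivAt (psi s) (-(2 ^ (1 - s) / Gamma s * z ^ s * besselK (1 - s) z)) z := by
  have hpsi : psi s = fun x => 2 ^ (1 - s) / Gamma s * (x ^ s * besselK s x) := by
    ext x
    unfold psi
    ring
  rw [hpsi]
  exact ((hasDerivAt_rpow_mul_besselK s hz).const_mul _).congr_deriv (by ring)

lemma antitoneOn_rpow_mul_besselK (ν : ℝ) :
    AntitoneOn (fun z => z ^ ν * besselK ν z) (Ioi 0) := by
  refine antitoneOn_of_hasDerivWithinAt_nonpos (f' := fun z => -(z ^ ν * besselK (1 - ν) z))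
    (convex_Ioi 0)
    (fun z hz => (hasDerivAt_rpow_mul_besselK ν hz).continuousAt.continuousWithinAt) ?_ ?_
  all_goals rw [interior_Ioi]
  · exact fun z hz => (hasDerivAt_rpow_mul_besselK ν hz).hasDerivWithinAt
  · exact fun z hz => neg_nonpos.2 (mul_nonneg (rpow_nonneg hz.le ν) (besselK_nonneg _ _))

lemma antitoneOn_exp_mul_besselK (ν : ℝ) :
    AntitoneOn (fun z => exp z * besselK ν z) (Ioi 0) := by
  intro a ha z hz haz
  simp only [besselK, ← integral_const_mul]
  refine setIntegral_mono_on ((integrableOn_besselK_integrand ν hz).const_mul _)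
    ((integrableOn_besselK_integrand ν ha).const_mul _) measurableSet_Ioi fun t _ => ?_
  rw [← mul_assoc, ← mul_assoc, ← exp_add, ← exp_add]
  exact mul_le_mul_of_nonneg_right (exp_le_exp.2 (by nlinarith [one_le_cosh t])) (cosh_pos _).le

lemma exists_rpow_mul_exp_neg_half_le {p : ℝ} (hp : 0 ≤ p) :
    ∃ M > 0, ∀ z, 0 ≤ z → z ^ p * exp (-z / 2) ≤ M := by
  rcases hp.eq_or_lt with rfl | hp
  · refine ⟨1, one_pos, fun z hz => ?_⟩
    rw [rpow_zero, one_mul, exp_le_one_iff]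
    linarith
  refine ⟨(2 * p) ^ p * exp (-p), by positivity, fun z hz => ?_⟩
  -- `x ≤ exp (x - 1)` at `x = z / (2 * p)`, raised to the power `p`
  have h : z / (2 * p) ≤ exp (z / (2 * p) - 1) := by
    linarith [add_one_le_exp (z / (2 * p) - 1)]
  have h' := rpow_le_rpow (by positivity) h hp.le
  rw [← exp_mul, div_rpow hz (by positivity)] at h'
  calc z ^ p * exp (-z / 2) = (2 * p) ^ p * (z ^ p / (2 * p) ^ p) * exp (-z / 2) := by
        field_simp
    _ ≤ (2 * p) ^ p * exp ((z / (2 * p) - 1) * p) * exp (-z / 2) := by gcongr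
    _ = (2 * p) ^ p * exp (-p) := by
        rw [mul_assoc, ← exp_add]
        congr 2
        field_simp
        ring

lemma rpow_mul_besselK_le_rpow_mul {ν σ a z : ℝ} (ρ : ℝ) (hσν : σ ≤ ν) (ha : 0 < a)
    (haz : a ≤ z) : z ^ ρ * besselK ν z ≤ z ^ (ρ - σ) * (a ^ σ * besselK ν a) := by
  have hz := ha.trans_le haz
  have hpow : a ^ (ν - σ) ≤ z ^ (ν - σ) := rpow_le_rpow ha.le haz (by linarith)
  have hKa := besselK_nonneg ν a
  calc z ^ ρ * besselK ν z = z ^ (ρ - ν) * (z ^ ν * besselK ν z) := by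
        rw [← mul_assoc, ← rpow_add hz, sub_add_cancel]
    _ ≤ z ^ (ρ - ν) * (a ^ ν * besselK ν a) :=
        mul_le_mul_of_nonneg_left (antitoneOn_rpow_mul_besselK ν ha hz haz) (by positivity)
    _ = z ^ (ρ - ν) * a ^ (ν - σ) * (a ^ σ * besselK ν a) := by
        rw [mul_assoc, ← mul_assoc (a ^ (ν - σ)), ← rpow_add ha, sub_add_cancel]
    _ ≤ z ^ (ρ - ν) * z ^ (ν - σ) * (a ^ σ * besselK ν a) := by gcongr
    _ = z ^ (ρ - σ) * (a ^ σ * besselK ν a) := by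
        rw [← rpow_add hz, sub_add_sub_cancel]

lemma rpow_mul_besselK_le_mul_exp_mul {ν ρ M b z : ℝ}
    (hM : ∀ x, 0 ≤ x → x ^ ρ * exp (-x / 2) ≤ M) (hb : 0 < b) (hbz : b ≤ z) :
    z ^ ρ * besselK ν z ≤ M * exp (-z / 2) * (exp b * besselK ν b) := by
  have hz := hb.trans_le hbz
  have hexp : exp (-z / 2) * exp (-z / 2) * exp z = 1 := by
    rw [← exp_add, ← exp_add, ← exp_zero]
    ring_nf
  calc z ^ ρ * besselK ν z = z ^ ρ * exp (-z / 2) * exp (-z / 2) * (exp z * besselK ν z) := by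
        linear_combination -(z ^ ρ * besselK ν z) * hexp
    _ ≤ z ^ ρ * exp (-z / 2) * exp (-z / 2) * (exp b * besselK ν b) :=
        mul_le_mul_of_nonneg_left (antitoneOn_exp_mul_besselK ν hb hz hbz) (by positivity)
    _ ≤ M * exp (-z / 2) * (exp b * besselK ν b) := by
        have hKb := besselK_nonneg ν b
        gcongr
        exact hM z hz.le

lemma rpow_mul_besselK_le_of_le_one {ν σ ρ a z : ℝ} (hσν : σ ≤ ν) (hσρ : σ ≤ ρ) (ha : 0 < a)
    (haz : a ≤ z) (hz1 : z ≤ 1) :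
    z ^ ρ * besselK ν z ≤ exp 1 * exp (-z / 2) * (a ^ σ * exp a * besselK ν a) := by
  have hz := ha.trans_le haz
  have hKa := besselK_nonneg ν a
  calc z ^ ρ * besselK ν z ≤ z ^ (ρ - σ) * (a ^ σ * besselK ν a) :=
        rpow_mul_besselK_le_rpow_mul ρ hσν ha haz
    _ ≤ exp (1 - z / 2 + a) * (a ^ σ * besselK ν a) := by
        gcongr
        exact (rpow_le_one hz.le hz1 (by linarith)).trans (one_le_exp (by linarith))
    _ = exp 1 * exp (-z / 2) * (a ^ σ * exp a * besselK ν a) := by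
        rw [exp_add, exp_sub, div_eq_mul_inv, ← exp_neg]
        ring_nf

lemma exists_rpow_mul_besselK_le {ν σ ρ : ℝ} (hσ : 0 ≤ σ) (hσν : σ ≤ ν) (hσρ : σ ≤ ρ) :
    ∃ c > 0, ∀ a, 0 < a → ∀ z, a ≤ z →
      z ^ ρ * besselK ν z ≤ c * exp (-z / 2) * (a ^ σ * exp a * besselK ν a) := by
  obtain ⟨M, hM, hMbound⟩ := exists_rpow_mul_exp_neg_half_le (hσ.trans hσρ)
  refine ⟨exp 1 * (1 + M), by positivity, fun a ha z haz => ?_⟩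
  have hKa := besselK_nonneg ν a
  have he : 1 ≤ exp 1 := one_le_exp zero_le_one
  suffices ∃ k ≤ exp 1 * (1 + M),
      z ^ ρ * besselK ν z ≤ k * exp (-z / 2) * (a ^ σ * exp a * besselK ν a) by
    obtain ⟨k, hk, h⟩ := this
    exact h.trans (by gcongr)
  rcases le_total z 1 with hz1 | h1z
  · exact ⟨exp 1, by nlinarith, rpow_mul_besselK_le_of_le_one hσν hσρ ha haz hz1⟩
  rcases le_total 1 a with h1a | ha1
  · refine ⟨M, by nlinarith, (rpow_mul_besselK_le_mul_exp_mul hMbound ha haz).trans ?_⟩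
    gcongr
    exact le_mul_of_one_le_left (by positivity) (one_le_rpow h1a hσ)
  · have hK1 : besselK ν 1 ≤ a ^ σ * exp a * besselK ν a := by
      have h := rpow_mul_besselK_le_rpow_mul σ hσν ha ha1
      rw [one_rpow, one_rpow, one_mul, one_mul] at h
      rw [mul_right_comm]
      exact h.trans (le_mul_of_one_le_right (by positivity) (one_le_exp ha.le))
    refine ⟨exp 1 * M, by nlinarith, ?_⟩
    calc z ^ ρ * besselK ν z ≤ M * exp (-z / 2) * (exp 1 * besselK ν 1) :=
          rpow_mul_besselK_le_mul_exp_mul hMbound one_pos h1z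
      _ ≤ M * exp (-z / 2) * (exp 1 * (a ^ σ * exp a * besselK ν a)) := by gcongr
      _ = exp 1 * M * exp (-z / 2) * (a ^ σ * exp a * besselK ν a) := by ring

/-- Exponential decay of `ψ_s'`. -/
theorem psi_deriv_exp_decay (s r : ℝ) (hs : s ∈ Set.Ioo (0:ℝ) 1)
    (hr : min (1 - s) (1/2) - s ≤ r) :
    ∃ c > 0, ∀ a : ℝ, 0 < a → ∀ z : ℝ, a ≤ z →
      |z ^ r * deriv (psi s) z| ≤
        c * Real.exp (-z / 2) *
          ((2 ^ (1 - s) / Real.Gamma s) * a ^ (min (1 - s) (1/2)) * Real.exp a *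
            besselK (1 - s) a) := by
  obtain ⟨c, hc, hbound⟩ := exists_rpow_mul_besselK_le (ν := 1 - s)
    (σ := min (1 - s) (1 / 2)) (ρ := r + s)
    (le_min (by linarith [hs.2]) (by norm_num)) (min_le_left _ _) (by linarith)
  refine ⟨c, hc, fun a ha z haz => ?_⟩
  have hz := ha.trans_le haz
  have hC : 0 ≤ 2 ^ (1 - s) / Gamma s := by
    have := Gamma_pos_of_pos hs.1
    positivity
  have hKz := besselK_nonneg (1 - s) z
  rw [(hasDerivAt_psi s hz).deriv, mul_neg, abs_neg,
    show z ^ r * (2 ^ (1 - s) / Gamma s * z ^ s * besselK (1 - s) z) =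
      2 ^ (1 - s) / Gamma s * (z ^ (r + s) * besselK (1 - s) z) by rw [rpow_add hz]; ring,
    abs_of_nonneg (by positivity)]
  calc 2 ^ (1 - s) / Gamma s * (z ^ (r + s) * besselK (1 - s) z)
      ≤ 2 ^ (1 - s) / Gamma s * (c * exp (-z / 2) *
          (a ^ min (1 - s) (1 / 2) * exp a * besselK (1 - s) a)) := by
        exact mul_le_mul_of_nonneg_left (hbound a ha z haz) hC
    _ = _ := by ring
end
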